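/- arXiv:2508.03231 — 2 statements merged into one kernel-verified Lean document; each statement's English description precedes it below -/
import Mathlib

section
/- Let A = ℤ ⊕ ℤ/2ℤ, write elements as a·z + b·ε where z generates the ℤ factor and ε the ℤ/2ℤ factor. Then the pair (a·z + b·ε, c·z + d·ε) generates A if and only if gcd(a, c) = 1 and a·d − b·c is odd (with b, d ∈ {0,1} viewed as integers). -/
/-!
Over `ℤ × ZMod n`, "odd" becomes "a unit of `ZMod n`". If `(1, 0)` and `(0, 1)` are integer
combinations of the two generators, the first coordinates give `IsCoprime a c`, and the two
combinations form an integer matrix whose product with `[[a, b], [c, d]]` is the identity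
modulo `n`, so `a d - b c` is a unit. Conversely, a Bézout relation `m a + k c = 1` produces an
element `(1, t)`, and `c • (a, b) - a • (c, d) = (0, b c - a d)`, rescaled by `-(a d - b c)⁻¹`,
produces `(0, 1)`; these two elements generate.
-/

variable {n : ℕ}

namespace AddSubgroup

lemma mem_closure_pair_iff {a c u : ℤ} {b d v : ZMod n} :
    ((u, v) : ℤ × ZMod n) ∈ closure {((a, b) : ℤ × ZMod n), (c, d)} ↔
      ∃ p q : ℤ, p * a + q * c = u ∧ (p : ZMod n) * b + q * d = v := by
  simp only [mem_closure_pair, Prod.smul_mk, Prod.mk_add_mk, Prod.mk.injEq]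
  simp only [smul_eq_mul, zsmul_eq_mul]

lemma eq_top_of_one_mem_of_zero_one_mem {S : AddSubgroup (ℤ × ZMod n)} {t : ZMod n}
    (h1 : ((1, t) : ℤ × ZMod n) ∈ S) (h01 : ((0, 1) : ℤ × ZMod n) ∈ S) : S = ⊤ := by
  refine eq_top_iff.2 fun ⟨x, y⟩ _ => ?_
  obtain ⟨k, hk⟩ := ZMod.intCast_surjective (y - (x : ZMod n) * t)
  have hxy : ((x, y) : ℤ × ZMod n) = x • (1, t) + k • (0, 1) := by
    ext <;> simp [hk]
  rw [hxy]
  exact add_mem (zsmul_mem h1 x) (zsmul_mem h01 k)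

theorem closure_pair_eq_top_iff (a c : ℤ) (b d : ZMod n) :
    closure {((a, b) : ℤ × ZMod n), (c, d)} = ⊤ ↔
      IsCoprime a c ∧ IsUnit ((a : ZMod n) * d - b * c) := by
  constructor
  · intro h
    obtain ⟨m, k, hm, hk⟩ := mem_closure_pair_iff.1 (h ▸ mem_top ((1, 0) : ℤ × ZMod n))
    obtain ⟨p, q, hp, hq⟩ := mem_closure_pair_iff.1 (h ▸ mem_top ((0, 1) : ℤ × ZMod n))
    refine ⟨⟨m, k, hm⟩, IsUnit.of_mul_eq_one_right ((m : ZMod n) * q - k * p) ?_⟩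
    have hm' := congrArg (Int.cast : ℤ → ZMod n) hm
    push_cast at hm'
    linear_combination ((p : ZMod n) * b + q * d) * hm' + hq - ((p : ZMod n) * a + q * c) * hk
  · rintro ⟨⟨m, k, hmk⟩, u, hu⟩
    obtain ⟨K, hK⟩ := ZMod.intCast_surjective (-↑u⁻¹ : ZMod n)
    have h01 : ((0, 1) : ℤ × ZMod n) ∈ closure {((a, b) : ℤ × ZMod n), (c, d)} := by
      refine mem_closure_pair_iff.2 ⟨K * c, -(K * a), by ring, ?_⟩
      push_cast
      rw [hK]
      linear_combination -(↑u⁻¹ : ZMod n) * hu + u.inv_mul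
    exact eq_top_of_one_mem_of_zero_one_mem (mem_closure_pair_iff.2 ⟨m, k, hmk, rfl⟩) h01

end AddSubgroup

/-- In A = ℤ ⊕ ℤ/2ℤ, a pair (a·z + b·ε, c·z + d·ε) generates A
if and only if gcd(a, c) = 1 and a·d − b·c is odd (b, d lifted to {0,1} ⊆ ℤ). -/
theorem stmt10 (a c : ℤ) (b d : ZMod 2) :
    AddSubgroup.closure {((a, b) : ℤ × ZMod 2), ((c, d) : ℤ × ZMod 2)} = ⊤ ↔
    IsCoprime a c ∧ Odd (a * (d.val : ℤ) - (b.val : ℤ) * c) := by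
  have det_cast : ((a * d.val - b.val * c : ℤ) : ZMod 2) = a * d - b * c := by
    push_cast [ZMod.natCast_val, ZMod.cast_id]
    ring
  rw [AddSubgroup.closure_pair_eq_top_iff, isUnit_iff_eq_one, ← det_cast,
    ZMod.intCast_eq_one_iff_odd]
end

section
/- Let a₁, a₂ ∈ ℕ^n with a₁ ≱ a₂ and a₂ ≱ a₁ (coordinatewise). Let v ∈ ℤ^n, let k ≥ 0 be an integer, and suppose k is the minimum natural number such that a₁ + k·v ≥ a₂ + w coordinatewise, where w ∈ ℤ^n is given. Assume k ≥ 2, a₁ + v ≱ a₂ + w, and a₂ + w ≱ a₁ + v. Then a₁ + k·v − w ≱ a₂ + v and a₂ + v ≱ a₁ + k·v − w. -/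
/-!
The first incomparability is the minimality of `k` in disguise: `a₂ + v ≤ a₁ + k • v - w`
says exactly `a₂ + w ≤ a₁ + (k - 1) • v`. For the second, `a₁ + k • v - w ≤ a₂ + v` together
with `a₂ + w ≤ a₁ + k • v` forces `0 ≤ v`, and then, as `k ≥ 2`,
`a₁ + v ≤ a₁ + (k - 1) • v ≤ a₂ + w`, against the root condition.
-/

section OrderedAddCommGroup

variable {α : Type*} [AddCommGroup α] [PartialOrder α] [IsOrderedAddMonoid α] {x y v w : α}

theorem add_le_sub_comm_iff : y + v ≤ x - w ↔ y + w ≤ x - v := by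
  rw [le_sub_iff_add_le, le_sub_iff_add_le, add_right_comm]

theorem sub_le_add_comm_iff : x - w ≤ y + v ↔ x - v ≤ y + w := by
  rw [sub_le_iff_le_add, sub_le_iff_le_add, add_right_comm]

theorem nonneg_of_add_le_of_sub_le_add (h₁ : y + w ≤ x) (h₂ : x - w ≤ y + v) : 0 ≤ v :=
  (le_add_iff_nonneg_right y).1 ((le_sub_iff_add_le.2 h₁).trans h₂)

theorem add_le_add_zsmul_sub_self (x : α) (hv : 0 ≤ v) {k : ℤ} (hk : 2 ≤ k) :
    x + v ≤ x + k • v - v := by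
  rw [add_sub_assoc, sub_eq_add_neg, ← sub_one_zsmul]
  gcongr
  simpa using zsmul_le_zsmul_left hv (show (1 : ℤ) ≤ k - 1 by omega)

end OrderedAddCommGroup

theorem stmt11_general (n : ℕ) (a₁ a₂ v w : Fin n → ℤ)
    (k : ℕ) (hk2 : 2 ≤ k)
    (hmin : a₂ + w ≤ a₁ + (k : ℤ) • v ∧
      ∀ k' : ℕ, k' < k → ¬ (a₂ + w ≤ a₁ + (k' : ℤ) • v))
    (hroot₂ : ¬ a₁ + v ≤ a₂ + w) :
    ¬ (a₂ + v ≤ a₁ + (k : ℤ) • v - w) ∧ ¬ (a₁ + (k : ℤ) • v - w ≤ a₂ + v) := by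
  have hpred : a₁ + ((k - 1 : ℕ) : ℤ) • v = a₁ + (k : ℤ) • v - v := by
    rw [Nat.cast_pred (by omega), sub_one_zsmul, add_sub_assoc, sub_eq_add_neg]
  refine ⟨fun h => hmin.2 (k - 1) (by omega) ?_, fun h => hroot₂ ?_⟩
  · rw [hpred]
    exact add_le_sub_comm_iff.1 h
  · have hv : 0 ≤ v := nonneg_of_add_le_of_sub_le_add hmin.1 h
    calc a₁ + v ≤ a₁ + (k : ℤ) • v - v := add_le_add_zsmul_sub_self a₁ hv (by omega)
      _ ≤ a₂ + w := sub_le_add_comm_iff.1 h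

/-- Jumping between roots: if a₁, a₂ are incomparable nonnegative vectors,
k ≥ 2 is the minimal natural number with a₁ + k·v ≥ a₂ + w, and the endpoints a₁ + v and
a₂ + w are incomparable, then the new endpoints a₁ + k·v − w and a₂ + v are incomparable. -/
theorem stmt11 (n : ℕ) (a₁ a₂ v w : Fin n → ℤ)
    (ha₁ : 0 ≤ a₁) (ha₂ : 0 ≤ a₂)
    (hinc₁ : ¬ a₂ ≤ a₁) (hinc₂ : ¬ a₁ ≤ a₂)
    (k : ℕ) (hk2 : 2 ≤ k)
    (hmin : a₂ + w ≤ a₁ + (k : ℤ) • v ∧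
      ∀ k' : ℕ, k' < k → ¬ (a₂ + w ≤ a₁ + (k' : ℤ) • v))
    (hroot₁ : ¬ a₂ + w ≤ a₁ + v) (hroot₂ : ¬ a₁ + v ≤ a₂ + w) :
    ¬ (a₂ + v ≤ a₁ + (k : ℤ) • v - w) ∧ ¬ (a₁ + (k : ℤ) • v - w ≤ a₂ + v) :=
  stmt11_general n a₁ a₂ v w k hk2 hmin hroot₂
end
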